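/- Let Λ be a finite-dimensional algebra, M a Λ-module, and C ⊆ K^{[-1,0]}(proj Λ) any collection of 2-term complexes. Then W(C) = { N ∈ mod Λ : every X ∈ C is N-semistable } is a wide subcategory of mod Λ: it is closed under kernels, cokernels, and extensions. -/

import Mathlib

/-! **Statement 18.**  Objects of `K^{[-1,0]}(proj Λ)` are modelled by 2-term complexes
`X = (X⁻¹ →ˣ X⁰)` of finitely generated projective `Λ`-modules; `X` is `N`-semistable if
precomposition with `x` is an isomorphism `Hom(X⁰, N) ≅ Hom(X⁻¹, N)`. -/

open CategoryTheory

namespace Stmt18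

universe u
variable (Λ : Type u) [Ring Λ]

/-- A 2-term complex of finitely generated projective `Λ`-modules. -/
structure TT where
  /-- the degree `-1` term -/
  Pm : ModuleCat.{u} Λ
  /-- the degree `0` term -/
  P0 : ModuleCat.{u} Λ
  projm : Module.Projective Λ Pm
  proj0 : Module.Projective Λ P0
  finm : Module.Finite Λ Pm
  fin0 : Module.Finite Λ P0
  /-- the differential -/
  d : Pm →ₗ[Λ] P0

/-- `X` is `N`-semistable. -/
def SS (X : TT Λ) (N : ModuleCat.{u} Λ) : Prop :=
  Function.Bijective fun f : X.P0 →ₗ[Λ] N => f.comp X.d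

/-- `W(C)`: modules `N` such that every `X ∈ C` is `N`-semistable. -/
def W (C : Set (TT Λ)) : Set (ModuleCat.{u} Λ) :=
  {N | ∀ X ∈ C, SS Λ X N}

/-! For a projective module `P`, `Hom(P, -)` is exact. Applying `Hom(X⁰, -)` and `Hom(X⁻¹, -)`
to the sequences `0 → ker φ → N → N'`, `N → N' → coker φ → 0` and `0 → A → E → B → 0` gives
two exact rows of abelian groups, joined by the vertical maps `x*`; the four and five lemmas
then carry bijectivity of `x*` from the outer modules to the new one. -/

open Function LinearMap

section ShortExactLadder

variable {R : Type*} [CommRing R] {M₁ M₂ M₃ N₁ N₂ N₃ : Type*}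
  [AddCommGroup M₁] [Module R M₁] [AddCommGroup M₂] [Module R M₂] [AddCommGroup M₃] [Module R M₃]
  [AddCommGroup N₁] [Module R N₁] [AddCommGroup N₂] [Module R N₂] [AddCommGroup N₃] [Module R N₃]

theorem _root_.LinearMap.bijective_of_bijective_of_bijective_of_shortExact
    (f₁ : M₁ →ₗ[R] M₂) (f₂ : M₂ →ₗ[R] M₃) (g₁ : N₁ →ₗ[R] N₂) (g₂ : N₂ →ₗ[R] N₃)
    (i₁ : M₁ →ₗ[R] N₁) (i₂ : M₂ →ₗ[R] N₂) (i₃ : M₃ →ₗ[R] N₃)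
    (hc₁ : g₁ ∘ₗ i₁ = i₂ ∘ₗ f₁) (hc₂ : g₂ ∘ₗ i₂ = i₃ ∘ₗ f₂)
    (hf₁ : Injective f₁) (hf : Exact f₁ f₂) (hf₂ : Surjective f₂)
    (hg₁ : Injective g₁) (hg : Exact g₁ g₂) (hg₂ : Surjective g₂)
    (hi₁ : Bijective i₁) (hi₃ : Bijective i₃) : Bijective i₂ :=
  bijective_of_surjective_of_bijective_of_bijective_of_injective
    (0 : Unit →ₗ[R] M₁) f₁ f₂ (0 : M₃ →ₗ[R] Unit) (0 : Unit →ₗ[R] N₁) g₁ g₂ (0 : N₃ →ₗ[R] Unit)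
    0 i₁ i₂ i₃ 0 (by simp) hc₁ hc₂ (by simp)
    ((exact_zero_iff_injective _ _).2 hf₁) hf ((exact_zero_iff_surjective _ _).2 hf₂)
    ((exact_zero_iff_injective _ _).2 hg₁) hg ((exact_zero_iff_surjective _ _).2 hg₂)
    (fun _ ↦ ⟨(), Subsingleton.elim _ _⟩) hi₁ hi₃ (fun _ _ _ ↦ Subsingleton.elim _ _)

end ShortExactLadder

section HomExact

variable {R : Type*} [Ring R] {P Q M N K : Type*}
  [AddCommGroup P] [Module R P] [AddCommGroup Q] [Module R Q]
  [AddCommGroup M] [Module R M] [AddCommGroup N] [Module R N] [AddCommGroup K] [Module R K]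

theorem _root_.Function.Exact.exact_linearMapComp_left [Module.Projective R Q]
    {f : M →ₗ[R] N} {g : N →ₗ[R] K} (h : Exact f g) :
    Exact (fun u : Q →ₗ[R] M ↦ f ∘ₗ u) (fun u : Q →ₗ[R] N ↦ g ∘ₗ u) := by
  intro u
  constructor
  · intro hu
    have hmem (x : Q) : u x ∈ range f := (h (u x)).1 (by simpa using congr($hu x))
    obtain ⟨w, hw⟩ := Module.projective_lifting_property f.rangeRestrict
      (u.codRestrict (range f) hmem) f.surjective_rangeRestrict
    exact ⟨w, ext fun x ↦ congr(Subtype.val ($hw x))⟩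
  · rintro ⟨w, rfl⟩
    change (g ∘ₗ f) ∘ₗ w = 0
    rw [h.linearMap_comp_eq_zero, zero_comp]

theorem _root_.Function.Surjective.surjective_linearMapComp_left_of_projective
    [Module.Projective R Q] {f : M →ₗ[R] N} (hf : Surjective f) :
    Surjective (fun u : Q →ₗ[R] M ↦ f ∘ₗ u) :=
  fun v ↦ Module.projective_lifting_property f v hf

theorem _root_.LinearMap.compRight_comp_lcomp (d : P →ₗ[R] Q) (φ : M →ₗ[R] N) :
    compRight ℤ φ ∘ₗ lcomp ℤ M d = lcomp ℤ N d ∘ₗ compRight ℤ φ :=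
  rfl

variable [Module.Projective R P] [Module.Projective R Q] (d : P →ₗ[R] Q)

theorem _root_.LinearMap.bijective_lcomp_ker (φ : M →ₗ[R] N)
    (hM : Bijective (lcomp ℤ M d)) (hN : Injective (lcomp ℤ N d)) :
    Bijective (lcomp ℤ (ker φ) d) :=
  bijective_of_bijective_of_injective_of_left_exact
    (compRight ℤ (ker φ).subtype) (compRight ℤ φ) (compRight ℤ (ker φ).subtype) (compRight ℤ φ)
    (lcomp ℤ _ d) (lcomp ℤ M d) (lcomp ℤ N d) (compRight_comp_lcomp d _)
    (compRight_comp_lcomp d φ) (exact_subtype_ker_map φ).exact_linearMapComp_left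
    (exact_subtype_ker_map φ).exact_linearMapComp_left hM hN
    (Submodule.injective_subtype _).injective_linearMapComp_left
    (Submodule.injective_subtype _).injective_linearMapComp_left

theorem _root_.LinearMap.bijective_lcomp_quotient_range (φ : M →ₗ[R] N)
    (hM : Surjective (lcomp ℤ M d)) (hN : Bijective (lcomp ℤ N d)) :
    Bijective (lcomp ℤ (N ⧸ range φ) d) :=
  bijective_of_surjective_of_bijective_of_right_exact
    (compRight ℤ φ) (compRight ℤ (range φ).mkQ) (compRight ℤ φ) (compRight ℤ (range φ).mkQ)
    (lcomp ℤ M d) (lcomp ℤ N d) (lcomp ℤ _ d) (compRight_comp_lcomp d φ)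
    (compRight_comp_lcomp d _) (exact_map_mkQ_range φ).exact_linearMapComp_left
    (exact_map_mkQ_range φ).exact_linearMapComp_left hM hN
    (Submodule.mkQ_surjective _).surjective_linearMapComp_left_of_projective
    (Submodule.mkQ_surjective _).surjective_linearMapComp_left_of_projective

theorem _root_.LinearMap.bijective_lcomp_of_shortExact (i : M →ₗ[R] N) (p : N →ₗ[R] K)
    (hi : Injective i) (hip : Exact i p) (hp : Surjective p)
    (hM : Bijective (lcomp ℤ M d)) (hK : Bijective (lcomp ℤ K d)) :
    Bijective (lcomp ℤ N d) :=
  bijective_of_bijective_of_bijective_of_shortExact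
    (compRight ℤ i) (compRight ℤ p) (compRight ℤ i) (compRight ℤ p)
    (lcomp ℤ M d) (lcomp ℤ N d) (lcomp ℤ K d) (compRight_comp_lcomp d i)
    (compRight_comp_lcomp d p) hi.injective_linearMapComp_left hip.exact_linearMapComp_left
    hp.surjective_linearMapComp_left_of_projective hi.injective_linearMapComp_left
    hip.exact_linearMapComp_left hp.surjective_linearMapComp_left_of_projective hM hK

end HomExact

attribute [local instance] TT.projm TT.proj0

theorem stmt18
    (C : Set (TT Λ)) :
    -- closed under kernels
    (∀ N ∈ W Λ C, ∀ N' ∈ W Λ C, ∀ φ : N →ₗ[Λ] N',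
      ModuleCat.of Λ (LinearMap.ker φ) ∈ W Λ C) ∧
    -- closed under cokernels
    (∀ N ∈ W Λ C, ∀ N' ∈ W Λ C, ∀ φ : N →ₗ[Λ] N',
      ModuleCat.of Λ (N' ⧸ LinearMap.range φ) ∈ W Λ C) ∧
    -- closed under extensions
    (∀ A E B : ModuleCat.{u} Λ, ∀ (i : A →ₗ[Λ] E) (p : E →ₗ[Λ] B),
      Function.Injective i → Function.Exact i p → Function.Surjective p →
      A ∈ W Λ C → B ∈ W Λ C → E ∈ W Λ C) :=
  ⟨fun _ hN _ hN' φ X hX ↦ bijective_lcomp_ker X.d φ (hN X hX) (hN' X hX).1,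
    fun _ hN _ hN' φ X hX ↦ bijective_lcomp_quotient_range X.d φ (hN X hX).2 (hN' X hX),
    fun _ _ _ i p hi hip hp hA hB X hX ↦
      bijective_lcomp_of_shortExact X.d i p hi hip hp (hA X hX) (hB X hX)⟩

end Stmt18
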